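/- arXiv:math/0606404 — 2 statements merged into one kernel-verified Lean document; each statement's English description precedes it below -/
import Mathlib

section
/- The number of ways to partition a set of size m into an unordered collection of b nonempty lists (sequences) equals (m!/b!) · C(m-1, b-1). -/
open List Finset

private lemma length_of_count_eq_one {m : ℕ} {l : List (Fin m)} (h : ∀ x, l.count x = 1) :
    l.length = m := by
  have hp : l ~ List.finRange m := List.perm_iff_count.2 (fun x => by
    rw [h x, List.count_eq_one_of_mem (List.nodup_finRange m) (List.mem_finRange x)])
  simpa using hp.length_eq

private lemma count_flatten_ofFn {m b : ℕ} (f : Fin b → List (Fin m)) (x : Fin m) :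
    (List.ofFn f).flatten.count x = ∑ i, (f i).count x := by
  rw [List.count_flatten, List.map_ofFn, List.sum_ofFn]; rfl

private lemma length_flatten_ofFn {m b : ℕ} (f : Fin b → List (Fin m)) :
    (List.ofFn f).flatten.length = ∑ i, (f i).length := by
  rw [List.length_flatten, List.map_ofFn, List.sum_ofFn]; rfl

private lemma sum_get_cast {α M : Type*} [AddCommMonoid M] (L : List α) (g : α → M) {b : ℕ}
    (hlen : L.length = b) :
    ∑ i : Fin b, g (L.get (Fin.cast hlen.symm i)) = (L.map g).sum := by
  subst hlen
  conv_rhs => rw [← List.ofFn_get L]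
  rw [List.map_ofFn, List.sum_ofFn]
  rfl

private lemma ofFn_get_cast {α : Type*} (L : List α) {b : ℕ} (hlen : L.length = b) :
    List.ofFn (fun i : Fin b => L.get (Fin.cast hlen.symm i)) = L := by
  subst hlen
  exact List.ofFn_get L

private lemma get_cast_eq_of_eq_ofFn {α : Type*} {b : ℕ} {f : Fin b → α} {L : List α}
    (hL : L = List.ofFn f) (hlen : L.length = b) (i : Fin b) :
    L.get (Fin.cast hlen.symm i) = f i := by
  subst hL
  rw [List.get_ofFn]
  congr 1

private def tupleEquiv (m b : ℕ) :
    {f : Fin b → List (Fin m) // (∀ i, f i ≠ []) ∧ ∀ x : Fin m, ∑ i, (f i).count x = 1} ≃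
      ({l : List (Fin m) // ∀ x : Fin m, l.count x = 1} × {c : Composition m // c.length = b}) where
  toFun f :=
    ⟨⟨(List.ofFn f.1).flatten, fun x => by rw [count_flatten_ofFn]; exact f.2.2 x⟩,
      ⟨⟨(List.ofFn f.1).map List.length,
        by
          intro i hi
          simp only [List.mem_map, List.mem_ofFn] at hi
          obtain ⟨l, ⟨j, rfl⟩, rfl⟩ := hi
          exact List.length_pos_iff.2 (f.2.1 j),
        by
          rw [List.map_ofFn, List.sum_ofFn]
          have := length_flatten_ofFn f.1
          rw [length_of_count_eq_one (fun x => by rw [count_flatten_ofFn]; exact f.2.2 x)] at this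
          exact this.symm⟩,
        by simp [Composition.length]⟩⟩
  invFun := fun ⟨⟨l, hl⟩, ⟨c, hc⟩⟩ =>
    have hlm : l.length = m := length_of_count_eq_one hl
    have hsum : c.blocks.sum = l.length := by rw [c.blocks_sum, hlm]
    have hplen : (l.splitWrtCompositionAux c.blocks).length = b := by
      rw [List.length_splitWrtCompositionAux]; exact hc
    have hmaplen : (l.splitWrtCompositionAux c.blocks).map List.length = c.blocks :=
      List.map_length_splitWrtCompositionAux (le_of_eq hsum)
    ⟨fun i => (l.splitWrtCompositionAux c.blocks).get (Fin.cast hplen.symm i),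
      by
        constructor
        · intro i
          have hmem : (l.splitWrtCompositionAux c.blocks).get (Fin.cast hplen.symm i) ∈
              l.splitWrtCompositionAux c.blocks := by
            simp only [List.get_eq_getElem]
            exact List.getElem_mem _
          have h2 : ((l.splitWrtCompositionAux c.blocks).get (Fin.cast hplen.symm i)).length ∈
              (l.splitWrtCompositionAux c.blocks).map List.length :=
            List.mem_map_of_mem hmem
          rw [hmaplen] at h2
          exact List.length_pos_iff.1 (c.blocks_pos h2)
        · intro x
          rw [sum_get_cast _ _ hplen, ← List.count_flatten,
            List.flatten_splitWrtCompositionAux hsum]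
          exact hl x⟩
  left_inv := by
    rintro ⟨f, hne, hcnt⟩
    have hcount : ∀ x : Fin m, (List.ofFn f).flatten.count x = 1 := fun x => by
      rw [count_flatten_ofFn]; exact hcnt x
    have hsum : ((List.ofFn f).map List.length).sum = (List.ofFn f).flatten.length :=
      List.length_flatten.symm
    have hpieces : (List.ofFn f).flatten.splitWrtCompositionAux ((List.ofFn f).map List.length)
        = List.ofFn f := by
      rw [List.eq_iff_flatten_eq]
      constructor
      · exact List.flatten_splitWrtCompositionAux hsum
      · exact List.map_length_splitWrtCompositionAux (le_of_eq hsum)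
    apply Subtype.ext
    funext i
    dsimp only
    exact get_cast_eq_of_eq_ofFn hpieces
      (by rw [List.length_splitWrtCompositionAux, List.length_map, List.length_ofFn]) i
  right_inv := by
    rintro ⟨⟨l, hl⟩, ⟨c, hc⟩⟩
    have hlm : l.length = m := length_of_count_eq_one hl
    have hsum : c.blocks.sum = l.length := by rw [c.blocks_sum, hlm]
    have hplen : (l.splitWrtCompositionAux c.blocks).length = b := by
      rw [List.length_splitWrtCompositionAux]; exact hc
    have hofn : List.ofFn (fun i : Fin b =>
        (l.splitWrtCompositionAux c.blocks).get (Fin.cast hplen.symm i)) =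
        l.splitWrtCompositionAux c.blocks := ofFn_get_cast _ hplen
    refine Prod.ext (Subtype.ext ?_) (Subtype.ext (Composition.ext ?_))
    · show (List.ofFn _).flatten = l
      rw [hofn]
      exact List.flatten_splitWrtCompositionAux hsum
    · show (List.ofFn _).map List.length = c.blocks
      rw [hofn]
      exact List.map_length_splitWrtCompositionAux (le_of_eq hsum)

private lemma image_orderIso {m b : ℕ} (S : Finset (List (Fin m))) (h : S.card = b)
    (σ : Equiv.Perm (Fin b)) :
    Finset.image (fun i => ((S.orderIsoOfFin h (σ i)) : List (Fin m))) Finset.univ = S := by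
  ext l
  simp only [Finset.mem_image, Finset.mem_univ, true_and]
  constructor
  · rintro ⟨i, rfl⟩
    exact (S.orderIsoOfFin h (σ i)).2
  · intro hl
    exact ⟨σ.symm ((S.orderIsoOfFin h).symm ⟨l, hl⟩), by simp⟩

private noncomputable def pairSetEquiv (m b : ℕ) :
    ({S : Finset (List (Fin m)) // S.card = b ∧ (∀ l ∈ S, l ≠ []) ∧
        ∀ x : Fin m, ∑ l ∈ S, l.count x = 1} × Equiv.Perm (Fin b)) ≃
      {f : Fin b → List (Fin m) // (∀ i, f i ≠ []) ∧ ∀ x : Fin m, ∑ i, (f i).count x = 1} :=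
  Equiv.ofBijective
    (fun p => ⟨fun i => ((p.1.1.orderIsoOfFin p.1.2.1) (p.2 i) : List (Fin m)),
      fun i => p.1.2.2.1 _ ((p.1.1.orderIsoOfFin p.1.2.1) (p.2 i)).2,
      fun x =>
        (Equiv.sum_comp p.2
            (fun j => (((p.1.1.orderIsoOfFin p.1.2.1) j : List (Fin m))).count x)).trans
          ((Equiv.sum_comp (p.1.1.orderIsoOfFin p.1.2.1).toEquiv
            (fun l => (l : List (Fin m)).count x)).trans
          ((Finset.sum_coe_sort _ _).trans (p.1.2.2.2 x)))⟩)
    (by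
      constructor
      · rintro ⟨⟨S, hS⟩, σ⟩ ⟨⟨T, hT⟩, τ⟩ hFG
        have h : (fun i => ((S.orderIsoOfFin hS.1 (σ i)) : List (Fin m))) =
            (fun i => ((T.orderIsoOfFin hT.1 (τ i)) : List (Fin m))) :=
          congrArg Subtype.val hFG
        have hST : S = T := by
          rw [← image_orderIso S hS.1 σ, ← image_orderIso T hT.1 τ, h]
        subst hST
        have hστ : σ = τ := by
          ext i
          have := congrFun h i
          have h2 : (S.orderIsoOfFin hS.1) (σ i) = (S.orderIsoOfFin hS.1) (τ i) :=
            Subtype.ext this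
          exact congrArg Fin.val ((S.orderIsoOfFin hS.1).toEquiv.injective h2)
        rw [hστ]
      · rintro ⟨f, hne, hcnt⟩
        have hinj : Function.Injective f := by
          intro i j hij
          by_contra hij'
          obtain ⟨x, hx⟩ := List.exists_mem_of_ne_nil (f i) (hne i)
          have hle : 2 ≤ ∑ k, (f k).count x := by
            have hsub : ({i, j} : Finset (Fin b)) ⊆ Finset.univ := Finset.subset_univ _
            have hsum2 : (f i).count x + (f j).count x ≤ ∑ k, (f k).count x := by
              simpa [Finset.sum_pair hij'] using
                Finset.sum_le_sum_of_subset (f := fun k => (f k).count x) hsub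
            have h1 : 0 < (f i).count x := List.count_pos_iff.2 hx
            have h2 : 0 < (f j).count x := by rw [← hij]; exact h1
            omega
          rw [hcnt x] at hle
          omega
        set S := Finset.image f Finset.univ with hSdef
        have hcard : S.card = b := by
          rw [hSdef, Finset.card_image_of_injective _ hinj, Finset.card_univ, Fintype.card_fin]
        have hSne : ∀ l ∈ S, l ≠ [] := by
          intro l hl
          rw [hSdef, Finset.mem_image] at hl
          obtain ⟨i, _, rfl⟩ := hl
          exact hne i
        have hScnt : ∀ x : Fin m, ∑ l ∈ S, l.count x = 1 := by
          intro x
          rw [hSdef, Finset.sum_image (fun a _ c _ h => hinj h)]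
          exact hcnt x
        have hbij : Function.Bijective
            (fun i => (⟨f i, Finset.mem_image_of_mem f (Finset.mem_univ i)⟩ : S)) := by
          rw [Fintype.bijective_iff_injective_and_card]
          constructor
          · intro i j hij
            exact hinj (congrArg Subtype.val hij)
          · rw [Fintype.card_coe, hcard, Fintype.card_fin]
        set e : Fin b ≃ S := Equiv.ofBijective _ hbij with hedef
        refine ⟨⟨⟨S, hcard, hSne, hScnt⟩, e.trans (S.orderIsoOfFin hcard).toEquiv.symm⟩, ?_⟩
        apply Subtype.ext
        funext i
        show ((S.orderIsoOfFin hcard) ((S.orderIsoOfFin hcard).toEquiv.symm (e i)) :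
          List (Fin m)) = f i
        exact (congrArg Subtype.val
          ((S.orderIsoOfFin hcard).toEquiv.apply_symm_apply (e i))).trans rfl)

private lemma card_permList (m : ℕ) :
    Nat.card {l : List (Fin m) // ∀ x : Fin m, l.count x = 1} = m.factorial := by
  have e1 : {l : List (Fin m) // ∀ x : Fin m, l.count x = 1} ≃
      {l : List (Fin m) // l ∈ (List.finRange m).permutations.toFinset} :=
    Equiv.subtypeEquivRight (fun l => by
      rw [List.mem_toFinset, List.mem_permutations, List.perm_iff_count]
      constructor
      · intro h x
        rw [h x, List.count_eq_one_of_mem (List.nodup_finRange m) (List.mem_finRange x)]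
      · intro h x
        rw [h x, List.count_eq_one_of_mem (List.nodup_finRange m) (List.mem_finRange x)])
  rw [Nat.card_congr e1, Nat.card_eq_fintype_card, Fintype.card_coe,
    List.toFinset_card_of_nodup (List.nodup_permutations _ (List.nodup_finRange m)),
    List.length_permutations, List.length_finRange]

private lemma compositionAsSetEquiv_card {m : ℕ} (hm : 1 ≤ m) (c : CompositionAsSet m) :
    (compositionAsSetEquiv m c).card + 1 = c.length := by
  classical
  have h0 : (0 : Fin m.succ) ∈ c.boundaries := c.zero_mem
  have hlast : Fin.last m ∈ c.boundaries := c.getLast_mem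
  have hne : (0 : Fin m.succ) ≠ Fin.last m := by
    intro h
    have := congrArg Fin.val h
    simp only [Fin.val_zero, Fin.val_last] at this
    omega
  have hbcard : c.boundaries.card = c.length + 1 := c.card_boundaries_eq_succ_length
  have hb2 : 2 ≤ c.boundaries.card :=
    Finset.one_lt_card.2 ⟨0, h0, Fin.last m, hlast, hne⟩
  have hmem : ∀ a : Fin (m - 1),
      a ∈ compositionAsSetEquiv m c ↔ ∃ j ∈ c.boundaries, (j : ℕ) = 1 + a := by
    intro a
    simp only [compositionAsSetEquiv, Equiv.coe_fn_mk, Set.mem_toFinset, Set.mem_setOf_eq]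
    constructor
    · intro h
      exact ⟨_, h, rfl⟩
    · rintro ⟨j, hj, hval⟩
      convert hj using 1
      apply Fin.ext
      exact hval.symm
  set t := (c.boundaries.erase (Fin.last m)).erase 0 with ht
  have htcard : t.card = c.boundaries.card - 2 := by
    rw [ht, Finset.card_erase_of_mem (Finset.mem_erase.2 ⟨hne, h0⟩),
      Finset.card_erase_of_mem hlast]
    omega
  have hcardeq : (compositionAsSetEquiv m c).card = t.card := by
    apply Finset.card_bij (fun (a : Fin (m - 1)) (_ : a ∈ compositionAsSetEquiv m c) =>
      (⟨1 + (a : ℕ), by have := a.isLt; omega⟩ : Fin m.succ))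
    · intro a ha
      rw [ht]
      obtain ⟨j, hj, hval⟩ := (hmem a).1 ha
      have hj' : (⟨1 + (a : ℕ), by have := a.isLt; omega⟩ : Fin m.succ) = j :=
        Fin.ext (by exact hval.symm)
      refine Finset.mem_erase.2 ⟨?_, Finset.mem_erase.2 ⟨?_, hj' ▸ hj⟩⟩
      · intro h
        have h2 : 1 + (a : ℕ) = 0 := congrArg Fin.val h
        omega
      · intro h
        have h2 : 1 + (a : ℕ) = m := congrArg Fin.val h
        have := a.isLt
        omega
    · intro j hj k hk hjk
      simp only [Fin.mk.injEq] at hjk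
      exact Fin.ext (by omega)
    · intro j hj
      rw [ht, Finset.mem_erase, Finset.mem_erase] at hj
      obtain ⟨hj0, hjl, hjb⟩ := hj
      have hj0' : (j : ℕ) ≠ 0 := fun h => hj0 (Fin.ext (by simp [h]))
      have hjl' : (j : ℕ) ≠ m := fun h => hjl (Fin.ext (by simp [h]))
      have hjm : (j : ℕ) < m + 1 := j.2
      refine ⟨⟨(j : ℕ) - 1, by omega⟩, ?_, ?_⟩
      · refine (hmem _).2 ⟨j, hjb, ?_⟩
        show (j : ℕ) = 1 + ((j : ℕ) - 1)
        omega
      · apply Fin.ext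
        show 1 + ((j : ℕ) - 1) = (j : ℕ)
        omega
  omega

private lemma card_compLen (m b : ℕ) (hb : 1 ≤ b) (hbm : b ≤ m) :
    Nat.card {c : Composition m // c.length = b} = (m - 1).choose (b - 1) := by
  have hm : 1 ≤ m := hb.trans hbm
  have e1 : {c : Composition m // c.length = b} ≃ {c : CompositionAsSet m // c.length = b} :=
    (compositionEquiv m).subtypeEquiv (fun c => by
      rw [show (compositionEquiv m c) = c.toCompositionAsSet from rfl,
        Composition.toCompositionAsSet_length])
  have e2 : {c : CompositionAsSet m // c.length = b} ≃
      {s : Finset (Fin (m - 1)) // s.card = b - 1} :=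
    (compositionAsSetEquiv m).subtypeEquiv (fun c => by
      have := compositionAsSetEquiv_card hm c
      omega)
  rw [Nat.card_congr (e1.trans e2), Nat.card_eq_fintype_card, Fintype.card_finset_len,
    Fintype.card_fin]

theorem partition_into_lists (m b : ℕ) (hb : 1 ≤ b) (hbm : b ≤ m) :
    {S : Finset (List (Fin m)) | S.card = b ∧ (∀ l ∈ S, l ≠ []) ∧
        ∀ x : Fin m, ∑ l ∈ S, l.count x = 1}.ncard =
      m.factorial / b.factorial * (m - 1).choose (b - 1) := by
  have hA1 : Nat.card {f : Fin b → List (Fin m) //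
      (∀ i, f i ≠ []) ∧ ∀ x : Fin m, ∑ i, (f i).count x = 1} =
      m.factorial * (m - 1).choose (b - 1) := by
    rw [Nat.card_congr (tupleEquiv m b), Nat.card_prod, card_permList,
      card_compLen m b hb hbm]
  have hA2 : Nat.card {f : Fin b → List (Fin m) //
      (∀ i, f i ≠ []) ∧ ∀ x : Fin m, ∑ i, (f i).count x = 1} =
      {S : Finset (List (Fin m)) | S.card = b ∧ (∀ l ∈ S, l ≠ []) ∧
        ∀ x : Fin m, ∑ l ∈ S, l.count x = 1}.ncard * b.factorial := by
    rw [Nat.card_congr (pairSetEquiv m b).symm, Nat.card_prod]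
    congr 1
    rw [Nat.card_eq_fintype_card, Fintype.card_perm, Fintype.card_fin]
  have key : {S : Finset (List (Fin m)) | S.card = b ∧ (∀ l ∈ S, l ≠ []) ∧
        ∀ x : Fin m, ∑ l ∈ S, l.count x = 1}.ncard * b.factorial =
      m.factorial * (m - 1).choose (b - 1) := by
    rw [← hA2, hA1]
  have hfac : b.factorial ∣ m.factorial := Nat.factorial_dvd_factorial hbm
  apply Nat.eq_of_mul_eq_mul_right (Nat.factorial_pos b)
  rw [key, mul_right_comm, Nat.div_mul_cancel hfac]
end

section
/- Given nonnegative integers a_1, ..., a_m with Σ i·a_i = m and b = Σ a_i, the number of unordered collections of b pairwise disjoint nonempty lists covering an m-element set, with exactly a_i lists of length i, equals m! / Π_{i=1}^{m} a_i!. -/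
open List

variable {α : Type*}

def chunks : List ℕ → List α → List (List α)
  | [], _ => []
  | n :: p, L => L.take n :: chunks p (L.drop n)

theorem flatten_chunks : ∀ (p : List ℕ) (L : List α), p.sum = L.length → (chunks p L).flatten = L
  | [], L, h => by simp [chunks]; exact (List.eq_nil_of_length_eq_zero h.symm).symm ▸ rfl
  | n :: p, L, h => by
      simp only [chunks, flatten_cons]
      rw [flatten_chunks p (L.drop n) (by simp only [List.length_drop]; simp at h; omega)]
      exact List.take_append_drop n L

theorem map_length_chunks : ∀ (p : List ℕ) (L : List α), p.sum ≤ L.length →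
    (chunks p L).map List.length = p
  | [], L, _ => rfl
  | n :: p, L, h => by
      simp only [chunks, List.map_cons]
      rw [List.length_take, map_length_chunks p (L.drop n) (by simp [List.length_drop]; simp at h; omega)]
      congr 1
      simp at h; omega

theorem chunks_flatten : ∀ (c : List (List α)), chunks (c.map List.length) c.flatten = c
  | [] => rfl
  | l :: c => by
      simp only [List.map_cons, flatten_cons, chunks]
      rw [List.take_left, List.drop_left, chunks_flatten c]

theorem nodup_of_flatten_nodup : ∀ (c : List (List α)), c.flatten.Nodup →
    (∀ l ∈ c, l ≠ []) → c.Nodup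
  | [], _, _ => List.nodup_nil
  | l :: c, h, hne => by
      rw [List.flatten_cons] at h
      have hd := List.disjoint_of_nodup_append h
      refine List.nodup_cons.2 ⟨fun hl => ?_, nodup_of_flatten_nodup c (h.of_append_right)
        (fun x hx => hne x (List.mem_cons_of_mem _ hx))⟩
      · obtain ⟨x, hx⟩ := List.exists_mem_of_ne_nil l (hne l (List.mem_cons_self))
        exact hd hx (List.mem_flatten.2 ⟨l, hl, hx⟩)

theorem card_nodup_toFinset [DecidableEq α] (s : Finset α) :
    Nat.card {c : List α // c.Nodup ∧ c.toFinset = s} = s.card.factorial := by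
  have hiff : ∀ c : List α, (c.Nodup ∧ c.toFinset = s) ↔ c ∈ s.toList.permutations := by
    intro c
    rw [List.mem_permutations]
    constructor
    · rintro ⟨h1, h2⟩
      exact List.perm_of_nodup_nodup_toFinset_eq h1 s.nodup_toList
        (by rw [h2, Finset.toList_toFinset])
    · intro h
      exact ⟨h.nodup_iff.2 s.nodup_toList, by rw [List.toFinset_eq_of_perm _ _ h, Finset.toList_toFinset]⟩
  have : {c : List α | c.Nodup ∧ c.toFinset = s} = ↑s.toList.permutations.toFinset := by
    ext c; simp [hiff c]
  rw [show {c : List α // c.Nodup ∧ c.toFinset = s} = ↑{c : List α | c.Nodup ∧ c.toFinset = s} from rfl,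
    Nat.card_coe_set_eq, this, Set.ncard_coe_finset,
    List.toFinset_card_of_nodup (List.nodup_permutations _ s.nodup_toList),
    List.length_permutations, Finset.length_toList]

theorem count_okLists [DecidableEq α] (a : ℕ → ℕ) : ∀ (L : List ℕ) (s : Finset (List α)),
    L.Nodup → (∀ l ∈ s, l.length ∈ L) →
    (∀ i ∈ L, (s.filter (fun l => l.length = i)).card = a i) →
    Nat.card {c : List (List α) // c.Nodup ∧ c.toFinset = s ∧
      c.map List.length = L.flatMap fun i => List.replicate (a i) i} =
    (L.map fun i => (a i).factorial).prod
  | [], s, _, hmem, _ => by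
      have hs : s = ∅ := by
        rw [Finset.eq_empty_iff_forall_notMem]
        intro l hl
        simpa using hmem l hl
      subst hs
      simp only [List.map_nil, List.prod_nil]
      rw [Nat.card_eq_one_iff_unique]
      constructor
      · constructor
        intro ⟨c, hc⟩ ⟨d, hd⟩
        have hc' : c = [] := by simpa using hc.2.2
        have hd' : d = [] := by simpa using hd.2.2
        simp [hc', hd']
      · exact ⟨[], by simp⟩
  | j :: L', s, hnd, hmem, hcount => by
      have hjL' : j ∉ L' := (List.nodup_cons.1 hnd).1
      set k := a j with hk
      set s₁ := s.filter (fun l => l.length = j) with hs₁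
      set s₂ := s.filter (fun l => ¬ l.length = j) with hs₂
      have hs₁card : s₁.card = k := hcount j (List.mem_cons_self)
      set pat' := L'.flatMap fun i => List.replicate (a i) i with hpat'
      have hpatlen : ∀ x : ℕ, x ∈ pat' → x ∈ L' := by
        intro x hx
        obtain ⟨i, hi, hxi⟩ := List.mem_flatMap.1 hx
        rwa [List.eq_of_mem_replicate hxi]
      have E : {c : List (List α) // c.Nodup ∧ c.toFinset = s ∧
            c.map List.length = (j :: L').flatMap fun i => List.replicate (a i) i} ≃
          {c₁ : List (List α) // c₁.Nodup ∧ c₁.toFinset = s₁} ×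
          {c₂ : List (List α) // c₂.Nodup ∧ c₂.toFinset = s₂ ∧ c₂.map List.length = pat'} := by
        refine
          { toFun := fun c => ⟨⟨c.1.take k, ?_⟩, ⟨c.1.drop k, ?_⟩⟩
            invFun := fun p => ⟨p.1.1 ++ p.2.1, ?_⟩
            left_inv := ?_
            right_inv := ?_ }
        · obtain ⟨c, hc1, hc2, hc3⟩ := c
          rw [List.flatMap_cons] at hc3
          have htk : (c.take k).map List.length = List.replicate k j :=
            by rw [List.map_take, hc3]; exact List.take_left' (by simp [hk])
          refine ⟨hc1.sublist (List.take_sublist _ _), ?_⟩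
          ext x
          simp only [List.mem_toFinset, hs₁, Finset.mem_filter, ← hc2]
          constructor
          · intro hx
            refine ⟨(List.take_sublist k c).mem hx, ?_⟩
            have : x.length ∈ List.replicate k j := htk ▸ List.mem_map_of_mem hx
            exact List.eq_of_mem_replicate this
          · rintro ⟨hx, hxl⟩
            rw [← List.take_append_drop k c, List.mem_append] at hx
            rcases hx with hx | hx
            · exact hx
            · exfalso
              have hdk : (c.drop k).map List.length = pat' :=
                by rw [List.map_drop, hc3]; exact List.drop_left' (by simp [hk])
              have : x.length ∈ pat' := hdk ▸ List.mem_map_of_mem hx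
              exact hjL' (hxl ▸ hpatlen _ this)
        · obtain ⟨c, hc1, hc2, hc3⟩ := c
          rw [List.flatMap_cons] at hc3
          have hdk : (c.drop k).map List.length = pat' :=
            by rw [List.map_drop, hc3]; exact List.drop_left' (by simp [hk])
          refine ⟨hc1.sublist (List.drop_sublist _ _), ?_, hdk⟩
          ext x
          simp only [List.mem_toFinset, hs₂, Finset.mem_filter, ← hc2]
          have hlen : ∀ y ∈ c.drop k, List.length y ≠ j := by
            intro y hy hyj
            have : y.length ∈ pat' := hdk ▸ List.mem_map_of_mem hy
            exact hjL' (hyj ▸ hpatlen _ this)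
          constructor
          · intro hx
            exact ⟨(List.drop_sublist k c).mem hx, hlen x hx⟩
          · rintro ⟨hx, hxl⟩
            rw [← List.take_append_drop k c, List.mem_append] at hx
            rcases hx with hx | hx
            · exfalso
              have htk : (c.take k).map List.length = List.replicate k j :=
                by rw [List.map_take, hc3]; exact List.take_left' (by simp [hk])
              have : x.length ∈ List.replicate k j := htk ▸ List.mem_map_of_mem hx
              exact hxl (List.eq_of_mem_replicate this)
            · exact hx
        · obtain ⟨⟨c₁, hc₁1, hc₁2⟩, ⟨c₂, hc₂1, hc₂2, hc₂3⟩⟩ := p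
          have hlen1 : ∀ y ∈ c₁, List.length y = j := by
            intro y hy
            have : y ∈ s₁ := hc₁2 ▸ List.mem_toFinset.2 hy
            exact (Finset.mem_filter.1 this).2
          have hlen2 : ∀ y ∈ c₂, List.length y ≠ j := by
            intro y hy
            have : y ∈ s₂ := hc₂2 ▸ List.mem_toFinset.2 hy
            exact (Finset.mem_filter.1 this).2
          have hc₁len : c₁.length = k := by
            rw [← hs₁card, ← hc₁2, List.toFinset_card_of_nodup hc₁1]
          refine ⟨List.Nodup.append hc₁1 hc₂1 ?_, ?_, ?_⟩
          · intro y hy1 hy2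
            exact hlen2 y hy2 (hlen1 y hy1)
          · show (c₁ ++ c₂).toFinset = s
            rw [List.toFinset_append, hc₁2, hc₂2]
            exact Finset.filter_union_filter_not_eq _ s
          · show List.map List.length (c₁ ++ c₂) = _
            rw [List.map_append, hc₂3, List.flatMap_cons]
            congr 1
            rw [List.eq_replicate_iff]
            refine ⟨by simp [hc₁len, hk], ?_⟩
            intro b hb
            obtain ⟨y, hy, rfl⟩ := List.mem_map.1 hb
            exact hlen1 y hy
        · rintro ⟨c, hc⟩
          simp [List.take_append_drop]
        · rintro ⟨⟨c₁, hc₁1, hc₁2⟩, ⟨c₂, hc₂⟩⟩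
          have hc₁len : c₁.length = k := by
            rw [← hs₁card, ← hc₁2, List.toFinset_card_of_nodup hc₁1]
          simp only [Prod.mk.injEq, Subtype.mk.injEq]
          exact ⟨List.take_left' hc₁len, List.drop_left' hc₁len⟩
      rw [Nat.card_congr E, Nat.card_prod, card_nodup_toFinset, hs₁card,
        List.map_cons, List.prod_cons,
        count_okLists a L' s₂ (List.nodup_cons.1 hnd).2 ?_ ?_]
      · intro l hl
        have := Finset.mem_filter.1 hl
        have hmem' := hmem l this.1
        rcases List.mem_cons.1 hmem' with h | h
        · exact absurd h this.2
        · exact h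
      · intro i hi
        have hij : ¬ (i = j) := fun h => hjL' (h ▸ hi)
        have heq : Finset.filter (fun l => l.length = i) s₂ =
            Finset.filter (fun l => l.length = i) s := by
          ext l
          constructor
          · intro h
            exact Finset.mem_filter.2 ⟨(Finset.mem_filter.1 (Finset.mem_filter.1 h).1).1,
              (Finset.mem_filter.1 h).2⟩
          · intro h
            obtain ⟨hl, hli⟩ := Finset.mem_filter.1 h
            exact Finset.mem_filter.2 ⟨Finset.mem_filter.2 ⟨hl, by rw [hli]; exact hij⟩, hli⟩
        rw [heq]
        exact hcount i (List.mem_cons_of_mem _ hi)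

theorem sum_flatMap_nat {β : Type*} (f : β → List ℕ) : ∀ l : List β,
    (l.flatMap f).sum = (l.map fun b => (f b).sum).sum
  | [] => rfl
  | b :: l => by simp [List.flatMap_cons, List.sum_append, sum_flatMap_nat f l]

theorem list_partitions_with_length_counts (m : ℕ) (hm : 1 ≤ m) (a : ℕ → ℕ)
    (ha : ∑ i ∈ Finset.Icc 1 m, i * a i = m) :
    {S : Finset (List (Fin m)) | (∀ l ∈ S, l ≠ []) ∧
        (∀ x : Fin m, ∑ l ∈ S, l.count x = 1) ∧
        ∀ i ∈ Finset.Icc 1 m, (S.filter (fun l => l.length = i)).card = a i}.ncard =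
      m.factorial / ∏ i ∈ Finset.Icc 1 m, (a i).factorial := by
  classical
  set pat : List ℕ := (Finset.Icc 1 m).toList.flatMap fun i => List.replicate (a i) i
    with hpatdef
  set K : ℕ := ∏ i ∈ Finset.Icc 1 m, (a i).factorial with hKdef
  have hKlist : ((Finset.Icc 1 m).toList.map fun i => (a i).factorial).prod = K :=
    Finset.prod_map_toList _ _
  have hKpos : 0 < K := Finset.prod_pos (fun i _ => Nat.factorial_pos _)
  have hpatsum : pat.sum = m := by
    rw [hpatdef, sum_flatMap_nat]
    have : ((Finset.Icc 1 m).toList.map fun b => (List.replicate (a b) b).sum).sum =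
        ∑ i ∈ Finset.Icc 1 m, (List.replicate (a i) i).sum := Finset.sum_map_toList _ _
    rw [this,
      Finset.sum_congr rfl fun i (_ : i ∈ Finset.Icc 1 m) =>
        (by simp [List.sum_replicate, smul_eq_mul, mul_comm] :
          (List.replicate (a i) i).sum = i * a i), ha]
  have hpatmem : ∀ x ∈ pat, 1 ≤ x := by
    intro x hx
    obtain ⟨i, hi, hxi⟩ := List.mem_flatMap.1 hx
    rw [List.eq_of_mem_replicate hxi]
    exact (Finset.mem_Icc.1 (Finset.mem_toList.1 hi)).1
  have hpatcount : ∀ i ∈ Finset.Icc 1 m, pat.count i = a i := by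
    intro i hi
    rw [hpatdef, List.count_flatMap]
    have : ((Finset.Icc 1 m).toList.map (List.count i ∘ fun j => List.replicate (a j) j)).sum =
        ∑ j ∈ Finset.Icc 1 m, List.count i (List.replicate (a j) j) := Finset.sum_map_toList _ _
    rw [this]
    rw [Finset.sum_congr rfl (fun j _ => (List.count_replicate : List.count i (List.replicate (a j) j) = _))]
    simp only [beq_iff_eq]
    rw [Finset.sum_ite_eq', if_pos hi]
  -- the ground finset of full-length nodup lists
  set 𝒜 : Finset (List (Fin m)) := (List.finRange m).permutations.toFinset with h𝒜def
  have h𝒜 : ∀ L : List (Fin m), L ∈ 𝒜 ↔ L.Nodup ∧ L.toFinset = Finset.univ := by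
    intro L
    rw [h𝒜def, List.mem_toFinset, List.mem_permutations]
    constructor
    · intro h
      exact ⟨h.nodup_iff.2 (List.nodup_finRange m),
        by rw [List.toFinset_eq_of_perm _ _ h, List.toFinset_finRange]⟩
    · rintro ⟨h1, h2⟩
      exact List.perm_of_nodup_nodup_toFinset_eq h1 (List.nodup_finRange m)
        (by rw [h2, List.toFinset_finRange])
  have h𝒜card : 𝒜.card = m.factorial := by
    rw [h𝒜def, List.toFinset_card_of_nodup (List.nodup_permutations _ (List.nodup_finRange m)),
      List.length_permutations, List.length_finRange]
  have hLlen : ∀ L : List (Fin m), L.Nodup → L.toFinset = Finset.univ → L.length = m := by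
    intro L h1 h2
    rw [← List.toFinset_card_of_nodup h1, h2, Finset.card_univ, Fintype.card_fin]
  -- chunk properties
  have hchunk : ∀ L : List (Fin m), L.Nodup → L.toFinset = Finset.univ →
      (chunks pat L).Nodup ∧ (chunks pat L).flatten = L ∧
      (chunks pat L).map List.length = pat ∧ (∀ l ∈ chunks pat L, l ≠ []) := by
    intro L h1 h2
    have hlen : L.length = m := hLlen L h1 h2
    have hfl : (chunks pat L).flatten = L := flatten_chunks pat L (by rw [hpatsum, hlen])
    have hml : (chunks pat L).map List.length = pat :=
      map_length_chunks pat L (by rw [hpatsum, hlen])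
    have hne : ∀ l ∈ chunks pat L, l ≠ [] := by
      intro l hl
      have : l.length ∈ pat := hml ▸ List.mem_map_of_mem hl
      have := hpatmem _ this
      exact List.ne_nil_of_length_pos (by omega)
    exact ⟨nodup_of_flatten_nodup _ (by rw [hfl]; exact h1) hne, hfl, hml, hne⟩
  set f : List (Fin m) → Finset (List (Fin m)) := fun L => (chunks pat L).toFinset with hfdef
  -- image property
  have himg : ∀ L : List (Fin m), L.Nodup → L.toFinset = Finset.univ →
      (∀ l ∈ f L, l ≠ []) ∧ (∀ x : Fin m, ∑ l ∈ f L, l.count x = 1) ∧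
        ∀ i ∈ Finset.Icc 1 m, ((f L).filter (fun l => l.length = i)).card = a i := by
    intro L h1 h2
    obtain ⟨hnd, hfl, hml, hne⟩ := hchunk L h1 h2
    refine ⟨fun l hl => hne l (List.mem_toFinset.1 hl), ?_, ?_⟩
    · intro x
      have hx : x ∈ L := List.mem_toFinset.1 (h2 ▸ Finset.mem_univ x)
      have : ∑ l ∈ (chunks pat L).toFinset, l.count x =
          ((chunks pat L).map fun l => l.count x).sum := List.sum_toFinset _ hnd
      show ∑ l ∈ (chunks pat L).toFinset, l.count x = 1
      rw [this, ← List.count_flatten, hfl]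
      exact List.count_eq_one_of_mem h1 hx
    · intro i hi
      have hsetfilter : (chunks pat L).toFinset.filter (fun l => l.length = i) =
          ((chunks pat L).filter (fun l => l.length = i)).toFinset := by
        ext y
        simp [List.mem_filter]
      show ((chunks pat L).toFinset.filter (fun l => l.length = i)).card = a i
      rw [hsetfilter, List.toFinset_card_of_nodup (hnd.filter _),
        ← List.countP_eq_length_filter]
      have : List.countP (fun l => l.length = i) (chunks pat L) =
          List.count i ((chunks pat L).map List.length) := by
        rw [List.count_eq_countP, List.countP_map]
        rfl
      rw [this, hml]
      exact hpatcount i hi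
  -- flatten property
  have hflat : ∀ (S : Finset (List (Fin m))), (∀ x : Fin m, ∑ l ∈ S, l.count x = 1) →
      ∀ c : List (List (Fin m)), c.Nodup → c.toFinset = S →
      c.flatten.Nodup ∧ c.flatten.toFinset = Finset.univ := by
    intro S hsum c hc1 hc2
    have hcnt : ∀ x : Fin m, c.flatten.count x = 1 := by
      intro x
      rw [List.count_flatten]
      have : (c.map (List.count x)).sum = ∑ l ∈ c.toFinset, l.count x :=
        (List.sum_toFinset _ hc1).symm
      rw [this, hc2]
      exact hsum x
    refine ⟨List.nodup_iff_count_le_one.2 (fun x => (hcnt x).le), ?_⟩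
    exact Finset.eq_univ_iff_forall.2 fun x =>
      List.mem_toFinset.2 (List.count_pos_iff.1 (by rw [hcnt x]; omega))
  -- membership/count hypotheses for count_okLists at any S in the set
  have hok : ∀ (S : Finset (List (Fin m))), (∀ l ∈ S, l ≠ []) →
      (∀ x : Fin m, ∑ l ∈ S, l.count x = 1) →
      (∀ i ∈ Finset.Icc 1 m, (S.filter (fun l => l.length = i)).card = a i) →
      Nat.card {c : List (List (Fin m)) // c.Nodup ∧ c.toFinset = S ∧
        c.map List.length = pat} = K := by
    intro S hne hsum hcnt
    have := count_okLists a (Finset.Icc 1 m).toList S (Finset.nodup_toList _) ?_ ?_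
    · rw [hKlist] at this
      exact this
    · intro l hl
      rw [Finset.mem_toList, Finset.mem_Icc]
      have hnodup : l.Nodup := by
        rw [List.nodup_iff_count_le_one]
        intro x
        calc l.count x ≤ ∑ l' ∈ S, l'.count x :=
              Finset.single_le_sum (fun _ _ => Nat.zero_le _) hl
          _ = 1 := hsum x
      constructor
      · have := hne l hl
        have : l.length ≠ 0 := fun h => this (List.eq_nil_of_length_eq_zero h)
        omega
      · calc l.length ≤ Fintype.card (Fin m) := hnodup.length_le_card
          _ = m := Fintype.card_fin m
    · intro i hi
      exact hcnt i (Finset.mem_toList.1 hi)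
  -- the image finset
  set ℬ : Finset (Finset (List (Fin m))) := 𝒜.image f with hℬdef
  have hTB : {S : Finset (List (Fin m)) | (∀ l ∈ S, l ≠ []) ∧
      (∀ x : Fin m, ∑ l ∈ S, l.count x = 1) ∧
      ∀ i ∈ Finset.Icc 1 m, (S.filter (fun l => l.length = i)).card = a i} = ↑ℬ := by
    ext S
    simp only [Set.mem_setOf_eq, hℬdef, Finset.coe_image, Set.mem_image, Finset.mem_coe]
    constructor
    · rintro ⟨hne, hsum, hcnt⟩
      have hpos : 0 < Nat.card {c : List (List (Fin m)) // c.Nodup ∧ c.toFinset = S ∧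
          c.map List.length = pat} := by rw [hok S hne hsum hcnt]; exact hKpos
      obtain ⟨⟨c, hc1, hc2, hc3⟩⟩ := (Nat.card_pos_iff.1 hpos).1
      obtain ⟨hfn, hft⟩ := hflat S hsum c hc1 hc2
      refine ⟨c.flatten, (h𝒜 _).2 ⟨hfn, hft⟩, ?_⟩
      show (chunks pat c.flatten).toFinset = S
      rw [← hc3, chunks_flatten, hc2]
    · rintro ⟨L, hL, rfl⟩
      obtain ⟨h1, h2⟩ := (h𝒜 L).1 hL
      exact himg L h1 h2
  rw [hTB, Set.ncard_coe_finset]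
  -- fiber counts
  have hfib : ∀ S ∈ ℬ, (𝒜.filter (fun L => f L = S)).card = K := by
    intro S hS
    obtain ⟨L₀, hL₀, rfl⟩ := Finset.mem_image.1 hS
    obtain ⟨hL₀1, hL₀2⟩ := (h𝒜 L₀).1 hL₀
    obtain ⟨hne₀, hsum₀, hcnt₀⟩ := himg L₀ hL₀1 hL₀2
    have e : {L : List (Fin m) // L ∈ 𝒜.filter (fun L => f L = f L₀)} ≃
        {c : List (List (Fin m)) // c.Nodup ∧ c.toFinset = f L₀ ∧
          c.map List.length = pat} := by
      refine
        { toFun := fun L => ⟨chunks pat L.1, ?_⟩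
          invFun := fun c => ⟨c.1.flatten, ?_⟩
          left_inv := ?_
          right_inv := ?_ }
      · obtain ⟨L, hL⟩ := L
        obtain ⟨hL1, hL2⟩ := Finset.mem_filter.1 hL
        obtain ⟨h1, h2⟩ := (h𝒜 L).1 hL1
        obtain ⟨hnd, hfl, hml, hne⟩ := hchunk L h1 h2
        exact ⟨hnd, hL2, hml⟩
      · obtain ⟨c, hc1, hc2, hc3⟩ := c
        obtain ⟨hfn, hft⟩ := hflat (f L₀) hsum₀ c hc1 hc2
        rw [Finset.mem_filter]
        refine ⟨(h𝒜 _).2 ⟨hfn, hft⟩, ?_⟩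
        show (chunks pat c.flatten).toFinset = f L₀
        rw [← hc3, chunks_flatten, hc2]
      · rintro ⟨L, hL⟩
        obtain ⟨hL1, hL2⟩ := Finset.mem_filter.1 hL
        obtain ⟨h1, h2⟩ := (h𝒜 L).1 hL1
        obtain ⟨hnd, hfl, hml, hne⟩ := hchunk L h1 h2
        exact Subtype.ext hfl
      · rintro ⟨c, hc1, hc2, hc3⟩
        refine Subtype.ext ?_
        show chunks pat c.flatten = c
        rw [← hc3, chunks_flatten]
    have : (𝒜.filter (fun L => f L = f L₀)).card =
        Nat.card {L : List (Fin m) // L ∈ 𝒜.filter (fun L => f L = f L₀)} :=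
      (Nat.card_eq_finsetCard _).symm
    rw [this, Nat.card_congr e, hok (f L₀) hne₀ hsum₀ hcnt₀]
  have hmain : m.factorial = ℬ.card * K := by
    rw [← h𝒜card,
      Finset.card_eq_sum_card_fiberwise (fun L hL => Finset.mem_image_of_mem f hL),
      Finset.sum_congr rfl hfib, Finset.sum_const, smul_eq_mul]
  rw [hmain, Nat.mul_div_cancel _ hKpos]
end
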